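/- Let M be an n×n indecomposable nonnegative matrix with odd period d and index γ. Then for all p ≥ 2γ, ∑_{p+2d} − ∑_p = 0 where ∑_q := ∑_{i=0}^{q} (−1)^i Bin(M^i) Bin(M^{q−i}); hence it suffices to verify the Eulerian condition for p < 2γ + 2d. -/
import Mathlib

/-- The binary reduction of a nonnegative real matrix. -/
noncomputable def Bin {n : ℕ} (A : Matrix (Fin n) (Fin n) ℝ) : Matrix (Fin n) (Fin n) ℝ :=
  Matrix.of fun i j => if 0 < A i j then 1 else 0

/-- Indecomposability (irreducibility). -/
def Indecomposable {n : ℕ} (A : Matrix (Fin n) (Fin n) ℝ) : Prop :=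
  ∀ i j : Fin n, ∃ t : ℕ, 0 < t ∧ 0 < (A ^ t) i j

/-- The Eulerian sum `Σ_q = ∑_{i=0}^{q} (-1)^i Bin(M^i) Bin(M^{q-i})`. -/
noncomputable def EulerSum {n : ℕ} (M : Matrix (Fin n) (Fin n) ℝ) (q : ℕ) :
    Matrix (Fin n) (Fin n) ℝ :=
  ∑ i ∈ Finset.range (q + 1), ((-1 : ℝ) ^ i) • (Bin (M ^ i) * Bin (M ^ (q - i)))

lemma eulerKey {n : ℕ} (M : Matrix (Fin n) (Fin n) ℝ)
    (d γ : ℕ) (hd : 0 < d) (hodd : Odd d) (hγ : 0 < γ)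
    (hper : ∀ t : ℕ, γ ≤ t → Bin (M ^ (t + d)) = Bin (M ^ t))
    (p : ℕ) (hp : 2 * γ ≤ p) :
    EulerSum M (p + 2 * d) = EulerSum M p := by
  have h2per : ∀ t : ℕ, γ ≤ t → Bin (M ^ (t + 2 * d)) = Bin (M ^ t) := by
    intro t ht
    have h : t + 2 * d = (t + d) + d := by ring
    rw [h, hper _ (by omega), hper _ ht]
  set g : ℕ → Matrix (Fin n) (Fin n) ℝ :=
    fun i => ((-1 : ℝ) ^ i) • (Bin (M ^ i) * Bin (M ^ (p + 2 * d - i))) with hg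
  set h : ℕ → Matrix (Fin n) (Fin n) ℝ :=
    fun i => ((-1 : ℝ) ^ i) • (Bin (M ^ i) * Bin (M ^ (p - i))) with hh
  set a : ℕ := p - γ + 1 with ha
  have hsignd : ((-1 : ℝ)) ^ d = -1 := hodd.neg_one_pow
  have hsign2d : ((-1 : ℝ)) ^ (2 * d) = 1 := by
    rw [two_mul, pow_add, hsignd]; ring
  -- EulerSum M (p + 2d) splits into three Ico pieces
  have split1 : EulerSum M (p + 2 * d) =
      (∑ i ∈ Finset.Ico 0 a, g i) + (∑ i ∈ Finset.Ico a (a + 2 * d), g i)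
        + (∑ i ∈ Finset.Ico (a + 2 * d) (p + 2 * d + 1), g i) := by
    rw [Finset.sum_Ico_consecutive g (by omega) (by omega),
      Finset.sum_Ico_consecutive g (by omega : (0:ℕ) ≤ a + 2 * d) (by omega)]
    rw [EulerSum, Finset.range_eq_Ico]
  have split2 : EulerSum M p =
      (∑ i ∈ Finset.Ico 0 a, h i) + (∑ i ∈ Finset.Ico a (p + 1), h i) := by
    rw [Finset.sum_Ico_consecutive h (by omega) (by omega)]
    rw [EulerSum, Finset.range_eq_Ico]
  -- first piece agrees
  have e1 : (∑ i ∈ Finset.Ico 0 a, g i) = ∑ i ∈ Finset.Ico 0 a, h i := by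
    refine Finset.sum_congr rfl fun i hi => ?_
    simp only [Finset.mem_Ico] at hi
    have h1 : p + 2 * d - i = (p - i) + 2 * d := by omega
    simp only [hg, hh, h1, h2per (p - i) (by omega)]
  -- middle piece vanishes
  have e2 : (∑ i ∈ Finset.Ico a (a + 2 * d), g i) = 0 := by
    rw [← Finset.sum_Ico_consecutive g (by omega : a ≤ a + d) (by omega : a + d ≤ a + 2 * d)]
    rw [show a + 2 * d = (a + d) + d by ring, ← Finset.sum_Ico_add' g a (a + d) d,
      ← Finset.sum_add_distrib]
    refine Finset.sum_eq_zero fun i hi => ?_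
    simp only [Finset.mem_Ico] at hi
    have hiγ : γ ≤ i := by omega
    have h1 : p + 2 * d - i = (p + d - i) + d := by omega
    have h2 : p + 2 * d - (i + d) = p + d - i := by omega
    have h3 : γ ≤ p + d - i := by omega
    show ((-1 : ℝ) ^ i) • (Bin (M ^ i) * Bin (M ^ (p + 2 * d - i)))
        + ((-1 : ℝ) ^ (i + d)) • (Bin (M ^ (i + d)) * Bin (M ^ (p + 2 * d - (i + d)))) = 0
    rw [h1, h2, hper _ h3, hper _ hiγ, pow_add, hsignd, mul_neg_one, neg_smul, add_neg_cancel]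
  -- last piece agrees with second piece of EulerSum M p
  have e3 : (∑ i ∈ Finset.Ico (a + 2 * d) (p + 2 * d + 1), g i)
      = ∑ i ∈ Finset.Ico a (p + 1), h i := by
    rw [show p + 2 * d + 1 = (p + 1) + 2 * d by ring,
      ← Finset.sum_Ico_add' g a (p + 1) (2 * d)]
    refine Finset.sum_congr rfl fun i hi => ?_
    simp only [Finset.mem_Ico] at hi
    have hiγ : γ ≤ i := by omega
    have h1 : p + 2 * d - (i + 2 * d) = p - i := by omega
    show ((-1 : ℝ) ^ (i + 2 * d)) • (Bin (M ^ (i + 2 * d)) * Bin (M ^ (p + 2 * d - (i + 2 * d))))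
        = ((-1 : ℝ) ^ i) • (Bin (M ^ i) * Bin (M ^ (p - i)))
    rw [h1, h2per _ hiγ, pow_add, hsign2d, mul_one]
  rw [split1, split2, e1, e2, e3, add_zero]

/-- For `M` indecomposable with odd period `d` and index `γ`: for all `p ≥ 2γ`,
`Σ_{p+2d} - Σ_p = 0`; hence the Eulerian condition needs only be verified for
`p < 2γ + 2d`. -/
theorem eulerian_condition_odd_period {n : ℕ} (M : Matrix (Fin n) (Fin n) ℝ)
    (hM : ∀ i j, 0 ≤ M i j) (hInd : Indecomposable M)
    (d γ : ℕ) (hd : 0 < d) (hodd : Odd d) (hγ : 0 < γ)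
    (hper : ∀ t : ℕ, γ ≤ t → Bin (M ^ (t + d)) = Bin (M ^ t))
    (hγmin : ∀ γ' : ℕ, (∀ t : ℕ, γ' ≤ t → Bin (M ^ (t + d)) = Bin (M ^ t)) → γ ≤ γ')
    (hdmin : ∀ d' : ℕ, 0 < d' →
      (∃ γ' : ℕ, ∀ t : ℕ, γ' ≤ t → Bin (M ^ (t + d')) = Bin (M ^ t)) → d ≤ d') :
    (∀ p : ℕ, 2 * γ ≤ p → EulerSum M (p + 2 * d) - EulerSum M p = 0) ∧
    ((∀ p : ℕ, 1 ≤ p → p < 2 * γ + 2 * d → EulerSum M p = 0) →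
      ∀ p : ℕ, 1 ≤ p → EulerSum M p = 0) := by
  have key := eulerKey M d γ hd hodd hγ hper
  constructor
  · intro p hp
    rw [key p hp, sub_self]
  · intro hsmall p hp
    induction p using Nat.strong_induction_on with
    | _ p ih =>
      by_cases hcase : p < 2 * γ + 2 * d
      · exact hsmall p hp hcase
      · have h1 : 2 * γ ≤ p - 2 * d := by omega
        have h2 : p - 2 * d + 2 * d = p := by omega
        have := key (p - 2 * d) h1
        rw [h2] at this
        rw [this]
        exact ih (p - 2 * d) (by omega) (by omega)
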